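/- arXiv:1904.00077 — 4 statements merged into one kernel-verified Lean document; each statement's English description precedes it below -/
import Mathlib

section
/- Let (z_t) be a nonnegative real sequence, let T ≥ 1, 0 < λ < 1, η ≥ 0, and suppose z_t ≤ λ · max_{1 ≤ k ≤ t} z_{t-k} + η for all 1 ≤ t ≤ T and z_t ≤ λ · max_{1 ≤ k ≤ T} z_{t-k} + η for all t > T. Then for all t ≥ 0, z_t ≤ (λ^{1/T})^t · z_0 + ((1 - λ^t)/(1 - λ)) · η. -/
theorem stmt_1 (z : ℕ → ℝ) (T : ℕ) (lam eta : ℝ)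
    (hz : ∀ t, 0 ≤ z t) (hT : 1 ≤ T) (hlam0 : 0 < lam) (hlam1 : lam < 1) (heta : 0 ≤ eta)
    (h1 : ∀ t (ht : 1 ≤ t), t ≤ T →
      z t ≤ lam * ((Finset.Icc 1 t).sup' (Finset.nonempty_Icc.mpr ht) fun k => z (t - k)) + eta)
    (h2 : ∀ t, T < t →
      z t ≤ lam * ((Finset.Icc 1 T).sup' (Finset.nonempty_Icc.mpr hT) fun k => z (t - k)) + eta) :
    ∀ t : ℕ, z t ≤ (lam ^ ((1 : ℝ) / T)) ^ t * z 0 + ((1 - lam ^ t) / (1 - lam)) * eta := by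
  have hTpos : (0 : ℝ) < T := by exact_mod_cast hT
  have h1l : (0:ℝ) < 1 - lam := by linarith
  -- step: for t ≥ 1, ∃ k, 1 ≤ k ∧ k ≤ t ∧ k ≤ T ∧ z t ≤ lam * z (t - k) + eta
  have step : ∀ t, 1 ≤ t → ∃ k, 1 ≤ k ∧ k ≤ t ∧ k ≤ T ∧ z t ≤ lam * z (t - k) + eta := by
    intro t ht
    by_cases htT : t ≤ T
    · obtain ⟨k, hk, hke⟩ := Finset.exists_mem_eq_sup' (Finset.nonempty_Icc.mpr ht)
        (fun k => z (t - k))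
      rw [Finset.mem_Icc] at hk
      exact ⟨k, hk.1, hk.2, le_trans hk.2 htT, by
        have := h1 t ht htT; rw [hke] at this; exact this⟩
    · push_neg at htT
      obtain ⟨k, hk, hke⟩ := Finset.exists_mem_eq_sup' (Finset.nonempty_Icc.mpr hT)
        (fun k => z (t - k))
      rw [Finset.mem_Icc] at hk
      exact ⟨k, hk.1, le_trans hk.2 htT.le, hk.2, by
        have := h2 t htT; rw [hke] at this; exact this⟩
  -- main induction
  have key : ∀ t : ℕ, ∃ N : ℕ, (t : ℝ) ≤ N * T ∧ N ≤ t ∧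
      z t ≤ lam ^ N * z 0 + (1 - lam ^ N) / (1 - lam) * eta := by
    intro t
    induction t using Nat.strong_induction_on with
    | _ t ih =>
      rcases Nat.eq_zero_or_pos t with rfl | ht
      · exact ⟨0, by simp, le_refl 0, by simp⟩
      · obtain ⟨k, hk1, hkt, hkT, hzt⟩ := step t ht
        have hlt : t - k < t := Nat.sub_lt ht hk1
        obtain ⟨N, hN1, hN2, hN3⟩ := ih (t - k) hlt
        refine ⟨N + 1, ?_, ?_, ?_⟩
        · have : (t : ℝ) ≤ (t - k : ℕ) + (T : ℝ) := by
            have : (t : ℝ) - k ≤ ((t - k : ℕ) : ℝ) := by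
              rw [Nat.cast_sub hkt]
            have hkT' : (k : ℝ) ≤ T := by exact_mod_cast hkT
            linarith
          push_cast
          nlinarith
        · omega
        · have hstep : z t ≤ lam * (lam ^ N * z 0 + (1 - lam ^ N) / (1 - lam) * eta) + eta :=
            le_trans hzt (by nlinarith)
          have : lam * (lam ^ N * z 0 + (1 - lam ^ N) / (1 - lam) * eta) + eta
              = lam ^ (N + 1) * z 0 + (1 - lam ^ (N + 1)) / (1 - lam) * eta := by
            field_simp
            ring
          linarith [this ▸ hstep]
  intro t
  obtain ⟨N, hN1, hN2, hN3⟩ := key t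
  have hb1 : lam ^ N ≤ (lam ^ ((1 : ℝ) / T)) ^ t := by
    have : (lam ^ ((1 : ℝ) / T)) ^ t = lam ^ ((t : ℝ) / T) := by
      rw [← Real.rpow_natCast (lam ^ ((1:ℝ)/T)) t, ← Real.rpow_mul hlam0.le]
      ring_nf
    rw [this, ← Real.rpow_natCast lam N]
    apply Real.rpow_le_rpow_of_exponent_ge hlam0 hlam1.le
    rw [div_le_iff₀ hTpos]
    exact hN1
  have hb2 : lam ^ t ≤ lam ^ N := pow_le_pow_of_le_one hlam0.le hlam1.le hN2
  have hd : (1 - lam ^ N) / (1 - lam) ≤ (1 - lam ^ t) / (1 - lam) := by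
    exact (div_le_div_iff_of_pos_right h1l).mpr (by linarith)
  calc z t ≤ lam ^ N * z 0 + (1 - lam ^ N) / (1 - lam) * eta := hN3
    _ ≤ (lam ^ ((1 : ℝ) / T)) ^ t * z 0 + (1 - lam ^ t) / (1 - lam) * eta := by
        have := hz 0
        nlinarith [mul_le_mul_of_nonneg_right hd heta, mul_le_mul_of_nonneg_right hb1 (hz 0)]
    _ = _ := by ring
end

section
/- Consider the time-varying system x_t = A_{t-1} x_{t-1} + B_{t-1} u_{t-1} + w_{t-1}, y_t = x_t + v_t, with controller internal state δ̂_t = y_t − Σ_{k=1}^{T-1} R_t(k+1) δ̂_{t-k} and input u_t = Σ_{k=0}^{T-1} M_t(k+1) δ̂_{t-k} (with δ̂_s = 0 for s < 0). Define Δ_k(A,B,R,M) = R(k+1) − A R(k) − B M(k) for 1 ≤ k ≤ T−1 and Δ_T(A,B,R,M) = −A R(T) − B M(T), with R_t(1) = I. Then the internal state satisfies the recursion δ̂_t = −Σ_{k=1}^{T} Δ_k(A_{t-1}, B_{t-1}, R_{t-1}, M_{t-1}) δ̂_{t-k} + Σ_{k=1}^{T-1} (R_{t-1} − R_t)(k+1)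 δ̂_{t-k} + (v_t − A_{t-1} v_{t-1}) + w_{t-1}. -/
open scoped Matrix

/-! The controller equation at time `t - 1` recovers `x (t - 1)` from past internal states. Substituting
it and `u (t - 1)` into the plant dynamics and shifting the lag index by one makes both sums run over
`1 ≤ k ≤ T`; since `R (t - 1) (T + 1) = 0`, the terms regroup into the `Δ_k`. -/

open Finset

theorem Finset.sum_Icc_lag_succ {α : Type*} [AddCommMonoid α] (S : ℕ) (t : ℤ) (g : ℕ → ℤ → α) :
    ∑ k ∈ Icc 0 S, g (k + 1) (t - 1 - k) = ∑ k ∈ Icc 1 (S + 1), g k (t - k) := by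
  rw [← zero_add 1, ← map_add_right_Icc, sum_map]
  refine sum_congr rfl fun k _ => ?_
  simp only [addRightEmbedding_apply, Nat.cast_add, Nat.cast_one, sub_add_eq_sub_sub_swap]

theorem state_eq_sum_sub_of_controller {m α : Type*} [Fintype m] [DecidableEq m] [Ring α]
    {R : ℕ → Matrix m m α} (hR1 : R 1 = 1)
    {δ : ℤ → m → α} {t : ℤ} {S : ℕ} {x v : m → α}
    (h : δ t = x + v - ∑ k ∈ Icc 1 S, R (k + 1) *ᵥ δ (t - k)) :
    x = ∑ k ∈ Icc 0 S, R (k + 1) *ᵥ δ (t - k) - v := by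
  rw [← insert_Icc_succ_left_eq_Icc (Nat.zero_le S), Order.succ_eq_add_one, zero_add,
    sum_insert (by simp), zero_add, hR1, Matrix.one_mulVec, Nat.cast_zero, sub_zero, h]
  abel

theorem stmt_9_general (n T : ℕ) (hT : 1 ≤ T)
    (A B : ℤ → Matrix (Fin n) (Fin n) ℝ)
    (R M : ℤ → ℕ → Matrix (Fin n) (Fin n) ℝ)
    (x y u w v δ : ℤ → (Fin n → ℝ))
    (hR1 : ∀ t : ℤ, R t 1 = 1)
    (hRT1 : ∀ t : ℤ, R t (T + 1) = 0)  -- convention Δ_T = -A R(T) - B M(T)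
    (hdyn : ∀ t : ℤ, x t = (A (t - 1)).mulVec (x (t - 1))
      + (B (t - 1)).mulVec (u (t - 1)) + w (t - 1))
    (hy : ∀ t : ℤ, y t = x t + v t)
    (hδ : ∀ t : ℤ, 0 ≤ t → δ t =
      y t - ∑ k ∈ Finset.Icc 1 (T - 1), (R t (k + 1)).mulVec (δ (t - (k : ℤ))))
    (hu : ∀ t : ℤ, 0 ≤ t → u t =
      ∑ k ∈ Finset.Icc 0 (T - 1), (M t (k + 1)).mulVec (δ (t - (k : ℤ)))) :
    ∀ t : ℤ, 1 ≤ t → δ t =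
      -(∑ k ∈ Finset.Icc 1 T,
          (R (t - 1) (k + 1) - A (t - 1) * R (t - 1) k
            - B (t - 1) * M (t - 1) k).mulVec (δ (t - (k : ℤ))))
      + (∑ k ∈ Finset.Icc 1 (T - 1),
          (R (t - 1) (k + 1) - R t (k + 1)).mulVec (δ (t - (k : ℤ))))
      + (v t - (A (t - 1)).mulVec (v (t - 1))) + w (t - 1) := by
  intro t ht
  obtain ⟨S, rfl⟩ := Nat.exists_eq_add_of_le' hT
  simp only [Nat.add_sub_cancel] at hδ hu ⊢
  have hx : x (t - 1) = ∑ k ∈ Icc 1 (S + 1), R (t - 1) k *ᵥ δ (t - k) - v (t - 1) := by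
    rw [← sum_Icc_lag_succ S t fun k s => R (t - 1) k *ᵥ δ s]
    exact state_eq_sum_sub_of_controller (hR1 _) (by rw [hδ _ (by omega), hy])
  have hu' : u (t - 1) = ∑ k ∈ Icc 1 (S + 1), M (t - 1) k *ᵥ δ (t - k) := by
    rw [hu _ (by omega), ← sum_Icc_lag_succ S t fun k s => M (t - 1) k *ᵥ δ s]
  have hR_top : ∑ k ∈ Icc 1 (S + 1), R (t - 1) (k + 1) *ᵥ δ (t - k)
      = ∑ k ∈ Icc 1 S, R (t - 1) (k + 1) *ᵥ δ (t - k) := by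
    rw [sum_Icc_succ_top (by omega), hRT1, Matrix.zero_mulVec, add_zero]
  rw [hδ t (by omega), hy, hdyn, hx, hu']
  simp only [Matrix.sub_mulVec, ← Matrix.mulVec_mulVec, sum_sub_distrib, Matrix.mulVec_sum,
    Matrix.mulVec_sub, hR_top]
  abel

theorem stmt_9 (n T : ℕ) (hT : 1 ≤ T)
    (A B : ℤ → Matrix (Fin n) (Fin n) ℝ)
    (R M : ℤ → ℕ → Matrix (Fin n) (Fin n) ℝ)
    (x y u w v δ : ℤ → (Fin n → ℝ))
    (hδneg : ∀ t : ℤ, t < 0 → δ t = 0)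
    (hR1 : ∀ t : ℤ, R t 1 = 1)
    (hRT1 : ∀ t : ℤ, R t (T + 1) = 0)  -- convention Δ_T = -A R(T) - B M(T)
    (hdyn : ∀ t : ℤ, x t = (A (t - 1)).mulVec (x (t - 1))
      + (B (t - 1)).mulVec (u (t - 1)) + w (t - 1))
    (hy : ∀ t : ℤ, y t = x t + v t)
    (hδ : ∀ t : ℤ, 0 ≤ t → δ t =
      y t - ∑ k ∈ Finset.Icc 1 (T - 1), (R t (k + 1)).mulVec (δ (t - (k : ℤ))))
    (hu : ∀ t : ℤ, 0 ≤ t → u t =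
      ∑ k ∈ Finset.Icc 0 (T - 1), (M t (k + 1)).mulVec (δ (t - (k : ℤ)))) :
    ∀ t : ℤ, 1 ≤ t → δ t =
      -(∑ k ∈ Finset.Icc 1 T,
          (R (t - 1) (k + 1) - A (t - 1) * R (t - 1) k
            - B (t - 1) * M (t - 1) k).mulVec (δ (t - (k : ℤ))))
      + (∑ k ∈ Finset.Icc 1 (T - 1),
          (R (t - 1) (k + 1) - R t (k + 1)).mulVec (δ (t - (k : ℤ))))
      + (v t - (A (t - 1)).mulVec (v (t - 1))) + w (t - 1) :=
  stmt_9_general n T hT A B R M x y u w v δ hR1 hRT1 hdyn hy hδ hu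
end

section
/- Consider the optimization problem (centsls) at time t with decision variables (λ_t, R_t, M_t) subject to: Σ_{k=1}^T ‖Δ_k(A', B', R_t, M_t)‖ ≤ λ_t for all [A',B'] in the extreme points of the polytope P_t, ‖Σ_{k=1}^{T-1}(R_{t-1} − R_t)(k+1) δ̂_{t-k}‖ ≤ m_a, and R_t(1) = I. If (R_{t'}, M_{t'}, λ_{t'}) is feasible at time t' and the polytopes are nested (P_t ⊆ P_{t-1} for all t), then setting R_t = R_{t'}, M_t = M_{t'}, λ_t = λ_{t'} is feasible for all t ≥ t'. -/
open scoped Matrix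

attribute [local instance] Matrix.normedAddCommGroup Matrix.normedSpace

theorem stmt_14 (n T : ℕ) (hT : 1 ≤ T) (lam' ma : ℝ) (hma : 0 ≤ ma)
    (P : ℕ → Set (Matrix (Fin n) (Fin n) ℝ × Matrix (Fin n) (Fin n) ℝ))
    (hnested : ∀ t, P (t + 1) ⊆ P t)
    (hhull : ∀ t, P t ⊆ convexHull ℝ (Set.extremePoints ℝ (P t)))
    (R' M' : ℕ → Matrix (Fin n) (Fin n) ℝ)
    (hRT1 : R' (T + 1) = 0)
    (δ : ℤ → (Fin n → ℝ))
    (t' : ℕ)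
    -- feasibility of (λ_{t'}, R_{t'}, M_{t'}) at time t'
    (hfeas : ∀ AB ∈ Set.extremePoints ℝ (P t'),
      ∑ k ∈ Finset.Icc 1 T, ‖R' (k + 1) - AB.1 * R' k - AB.2 * M' k‖ ≤ lam')
    (hR1 : R' 1 = 1) :
    -- keeping R_t = R', M_t = M', λ_t = λ' is feasible for all t ≥ t'
    ∀ t : ℕ, t' ≤ t →
      (∀ AB ∈ Set.extremePoints ℝ (P t),
        ∑ k ∈ Finset.Icc 1 T, ‖R' (k + 1) - AB.1 * R' k - AB.2 * M' k‖ ≤ lam') ∧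
      ‖∑ k ∈ Finset.Icc 1 (T - 1),
        (R' (k + 1) - R' (k + 1)).mulVec (δ ((t : ℤ) - (k : ℤ)))‖ ≤ ma ∧
      R' 1 = 1 := by
  intro t ht
  -- the sublevel set of the convex objective is convex
  set f : Matrix (Fin n) (Fin n) ℝ × Matrix (Fin n) (Fin n) ℝ → ℝ :=
    fun AB => ∑ k ∈ Finset.Icc 1 T, ‖R' (k + 1) - AB.1 * R' k - AB.2 * M' k‖ with hf
  have hconv : Convex ℝ {AB | f AB ≤ lam'} := by
    intro p hp q hq a b ha hb hab
    simp only [Set.mem_setOf_eq, hf] at hp hq ⊢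
    have key : ∀ k ∈ Finset.Icc 1 T,
        ‖R' (k + 1) - (a • p + b • q).1 * R' k - (a • p + b • q).2 * M' k‖ ≤
        a * ‖R' (k + 1) - p.1 * R' k - p.2 * M' k‖ +
        b * ‖R' (k + 1) - q.1 * R' k - q.2 * M' k‖ := by
      intro k _
      have : R' (k + 1) - (a • p + b • q).1 * R' k - (a • p + b • q).2 * M' k =
          a • (R' (k + 1) - p.1 * R' k - p.2 * M' k) +
          b • (R' (k + 1) - q.1 * R' k - q.2 * M' k) := by
        have hb' : b = 1 - a := by linarith
        subst hb'
        simp only [Prod.fst_add, Prod.snd_add, Prod.smul_fst, Prod.smul_snd,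
          smul_sub, add_mul, Matrix.smul_mul]
        module
      rw [this]
      calc ‖a • (R' (k + 1) - p.1 * R' k - p.2 * M' k) +
            b • (R' (k + 1) - q.1 * R' k - q.2 * M' k)‖
          ≤ ‖a • (R' (k + 1) - p.1 * R' k - p.2 * M' k)‖ +
            ‖b • (R' (k + 1) - q.1 * R' k - q.2 * M' k)‖ := norm_add_le _ _
        _ = a * ‖R' (k + 1) - p.1 * R' k - p.2 * M' k‖ +
            b * ‖R' (k + 1) - q.1 * R' k - q.2 * M' k‖ := by
            rw [norm_smul, norm_smul, Real.norm_of_nonneg ha, Real.norm_of_nonneg hb]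
    calc ∑ k ∈ Finset.Icc 1 T,
          ‖R' (k + 1) - (a • p + b • q).1 * R' k - (a • p + b • q).2 * M' k‖
        ≤ ∑ k ∈ Finset.Icc 1 T,
          (a * ‖R' (k + 1) - p.1 * R' k - p.2 * M' k‖ +
           b * ‖R' (k + 1) - q.1 * R' k - q.2 * M' k‖) := Finset.sum_le_sum key
      _ = a * (∑ k ∈ Finset.Icc 1 T, ‖R' (k + 1) - p.1 * R' k - p.2 * M' k‖) +
          b * (∑ k ∈ Finset.Icc 1 T, ‖R' (k + 1) - q.1 * R' k - q.2 * M' k‖) := by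
          rw [Finset.sum_add_distrib, Finset.mul_sum, Finset.mul_sum]
      _ ≤ a * lam' + b * lam' := by
          gcongr
      _ = lam' := by rw [← add_mul, hab, one_mul]
  -- P t ⊆ P t' by nestedness
  have hsub : P t ⊆ P t' := by
    induction t, ht using Nat.le_induction with
    | base => exact subset_rfl
    | succ m hm ih => exact (hnested m).trans ih
  -- hull bound
  have hbound : ∀ AB ∈ P t', f AB ≤ lam' := by
    intro AB hAB
    have := hhull t' hAB
    have hhl : convexHull ℝ (Set.extremePoints ℝ (P t')) ⊆ {AB | f AB ≤ lam'} :=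
      convexHull_min (fun x hx => hfeas x hx) hconv
    exact hhl this
  refine ⟨fun AB hAB => hbound AB (hsub hAB.1), ?_, hR1⟩
  simp [hma]
end

section
/- Let N, T ≥ 1, and suppose nonnegative reals δ^j_t (j = 1..N, t ∈ ℤ, equal to 0 for t < 0) satisfy Σ_j δ^j_t ≤ λ · max_{1 ≤ k ≤ T} Σ_j δ^j_{t-k} + c for all t ≥ 1, where 0 < λ < 1 and c = Σ_{i=1}^N (m^i_1 + d̄_i m^i_2 + η̂_i) ≥ 0. Then for all t ≥ 0, Σ_j δ^j_t ≤ (λ^{1/T})^t · (Σ_j δ^j_0) + ((1−λ^t)/(1−λ)) c, and in particular sup_t Σ_j δ^j_t ≤ Σ_j δ^j_0 + c/(1−λ). -/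
theorem stmt_16 (N T : ℕ) (hN : 1 ≤ N) (hT : 1 ≤ T) (lam : ℝ)
    (hlam0 : 0 < lam) (hlam1 : lam < 1)
    (δ : Fin N → ℤ → ℝ) (m1 m2 etah : Fin N → ℝ) (dbar : Fin N → ℕ)
    (hδnn : ∀ j t, 0 ≤ δ j t)
    (hδneg : ∀ j (t : ℤ), t < 0 → δ j t = 0)
    (hc : 0 ≤ ∑ i, (m1 i + (dbar i : ℝ) * m2 i + etah i))
    (hrec : ∀ t : ℤ, 1 ≤ t →
      ∑ j, δ j t ≤ lam * ((Finset.Icc 1 T).sup' (Finset.nonempty_Icc.mpr hT)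
          fun k => ∑ j, δ j (t - (k : ℤ)))
        + ∑ i, (m1 i + (dbar i : ℝ) * m2 i + etah i)) :
    ∀ t : ℕ,
      (∑ j, δ j (t : ℤ)) ≤ (lam ^ ((1 : ℝ) / T)) ^ t * (∑ j, δ j 0)
        + ((1 - lam ^ t) / (1 - lam)) * ∑ i, (m1 i + (dbar i : ℝ) * m2 i + etah i) ∧
      (∑ j, δ j (t : ℤ)) ≤ (∑ j, δ j 0)
        + (∑ i, (m1 i + (dbar i : ℝ) * m2 i + etah i)) / (1 - lam) := by
  set c := ∑ i, (m1 i + (dbar i : ℝ) * m2 i + etah i) with hcdef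
  set μ := lam ^ ((1 : ℝ) / T) with hμdef
  have hT0 : (T : ℝ) ≠ 0 := Nat.cast_ne_zero.mpr (by omega)
  have hμpos : 0 < μ := Real.rpow_pos_of_pos hlam0 _
  have hμle1 : μ ≤ 1 := Real.rpow_le_one hlam0.le hlam1.le (by positivity)
  have hμT : μ ^ T = lam := by
    rw [hμdef, ← Real.rpow_natCast (lam ^ ((1:ℝ)/T)) T, ← Real.rpow_mul hlam0.le,
      one_div, inv_mul_cancel₀ hT0, Real.rpow_one]
  have h1lam : 0 < 1 - lam := by linarith
  have hSnn : ∀ t : ℤ, 0 ≤ ∑ j, δ j t := fun t => Finset.sum_nonneg fun j _ => hδnn j t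
  have main : ∀ t : ℕ, (∑ j, δ j (t : ℤ)) ≤
      μ ^ t * (∑ j, δ j 0) + ((1 - lam ^ t) / (1 - lam)) * c := by
    intro t
    induction t using Nat.strong_induction_on with
    | _ t ih =>
      rcases Nat.eq_zero_or_pos t with rfl | htpos
      · simp
      · have h1t : (1 : ℤ) ≤ (t : ℤ) := by exact_mod_cast htpos
        obtain ⟨k0, hk0mem, hk0⟩ := Finset.exists_mem_eq_sup'
          (Finset.nonempty_Icc.mpr hT) (fun k => ∑ j, δ j ((t : ℤ) - k))
        have hrec' := hrec t h1t
        rw [hk0] at hrec'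
        obtain ⟨hk1, hkT⟩ := Finset.mem_Icc.mp hk0mem
        by_cases hcase : (t : ℤ) - k0 < 0
        · have hz : (∑ j, δ j ((t : ℤ) - k0)) = 0 :=
            Finset.sum_eq_zero fun j _ => hδneg j _ hcase
          rw [hz, mul_zero, zero_add] at hrec'
          have hgeom : (1 : ℝ) ≤ (1 - lam ^ t) / (1 - lam) := by
            rw [le_div_iff₀ h1lam]
            have h2 : lam ^ t ≤ lam ^ 1 := pow_le_pow_of_le_one hlam0.le hlam1.le htpos
            simp only [pow_one] at h2
            linarith
          nlinarith [hSnn 0, pow_pos hμpos t]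
        · push_neg at hcase
          have hkt : k0 ≤ t := by exact_mod_cast (by linarith : (k0 : ℤ) ≤ (t : ℤ))
          set s := t - k0 with hsdef
          have hseq : (t : ℤ) - (k0 : ℤ) = (s : ℤ) := by
            have : s + k0 = t := Nat.sub_add_cancel hkt
            push_cast [← this]; ring
          rw [hseq] at hrec'
          have hslt : s < t := by omega
          have ihs := ih s hslt
          have hst1 : s + 1 ≤ t := by omega
          have htTs : t ≤ T + s := by omega
          have hA : lam * μ ^ s ≤ μ ^ t := by
            rw [← hμT, ← pow_add]
            exact pow_le_pow_of_le_one hμpos.le hμle1 htTs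
          have key : lam * ((1 - lam ^ s) / (1 - lam)) + 1 ≤ (1 - lam ^ t) / (1 - lam) := by
            have heq : lam * ((1 - lam ^ s) / (1 - lam)) + 1
                = (lam * (1 - lam ^ s) + (1 - lam)) / (1 - lam) := by field_simp
            rw [heq, div_le_div_iff₀ h1lam h1lam]
            have h2 : lam ^ t ≤ lam ^ (s + 1) :=
              pow_le_pow_of_le_one hlam0.le hlam1.le hst1
            nlinarith [pow_succ lam s]
          have hmul1 : lam * (∑ j, δ j (s : ℤ)) ≤
              lam * (μ ^ s * (∑ j, δ j 0) + ((1 - lam ^ s) / (1 - lam)) * c) :=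
            mul_le_mul_of_nonneg_left ihs hlam0.le
          have hmul2 : lam * μ ^ s * (∑ j, δ j 0) ≤ μ ^ t * (∑ j, δ j 0) :=
            mul_le_mul_of_nonneg_right hA (hSnn 0)
          have hmul3 : (lam * ((1 - lam ^ s) / (1 - lam)) + 1) * c ≤
              ((1 - lam ^ t) / (1 - lam)) * c :=
            mul_le_mul_of_nonneg_right key hc
          nlinarith
  intro t
  refine ⟨main t, ?_⟩
  have h1 : μ ^ t ≤ 1 := pow_le_one₀ hμpos.le hμle1
  have h2 : (1 - lam ^ t) / (1 - lam) ≤ 1 / (1 - lam) := by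
    gcongr
    nlinarith [pow_nonneg hlam0.le t]
  have hm1 : μ ^ t * (∑ j, δ j 0) ≤ ∑ j, δ j 0 := by
    nlinarith [hSnn 0]
  have hm2 : ((1 - lam ^ t) / (1 - lam)) * c ≤ (1 / (1 - lam)) * c :=
    mul_le_mul_of_nonneg_right h2 hc
  have heq : (1 / (1 - lam)) * c = c / (1 - lam) := one_div_mul_eq_div _ _
  linarith [main t]
end
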